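/- arXiv:math/9810079 — 14 statements merged into one kernel-verified Lean document; each statement's English description precedes it below -/
import Mathlib

section
/- For a function f from a topological space X to a topological space Y, the following are equivalent: (1) f is contra-semicontinuous; (2) for every closed subset F of Y, f⁻¹(F) is semi-open in X; (3) for each point x of X and each closed subset F of Y containing f(x), there exists a semi-open subset U of X containing x such that f(U) ⊆ F; (4) interior(closure(f⁻¹(V))) = interior(f⁻¹(V)) for every open subset V of Y; (5) closure(interior(f⁻¹(F))) = closure(f⁻¹(F)) for every closed subset F of Y. -/
open Set

section Defs
variable {X : Type*} [TopologicalSpace X]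

/-- A set is semi-open if it is contained in the closure of its interior. -/
def SemiOpen (A : Set X) : Prop := A ⊆ closure (interior A)

/-- A set is semi-closed if the interior of its closure is contained in it. -/
def SemiClosed (A : Set X) : Prop := interior (closure A) ⊆ A

/-- A set is semi-regular if it is both semi-open and semi-closed. -/
def SemiRegular (A : Set X) : Prop := SemiOpen A ∧ SemiClosed A

/-- A set is β-open if it is contained in the closure of the interior of its closure. -/
def BetaOpen (A : Set X) : Prop := A ⊆ closure (interior (closure A))

/-- A set is regular open if it equals the interior of its closure. -/
def RegularOpen (A : Set X) : Prop := A = interior (closure A)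

/-- A set is regular closed if it equals the closure of its interior. -/
def RegularClosed (A : Set X) : Prop := A = closure (interior A)

/-- A set is α-open if it is contained in the interior of the closure of its interior. -/
def AlphaOpen (A : Set X) : Prop := A ⊆ interior (closure (interior A))

/-- A set is preopen if it is contained in the interior of its closure. -/
def Preopen (A : Set X) : Prop := A ⊆ interior (closure A)

/-- A set is preclosed if the closure of its interior is contained in it. -/
def Preclosed (A : Set X) : Prop := closure (interior A) ⊆ A

/-- A B-set is the intersection of an open set and a semi-closed set. -/
def BSet (A : Set X) : Prop := ∃ U F : Set X, IsOpen U ∧ SemiClosed F ∧ A = U ∩ F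

/-- The semi-closure of a set: the intersection of all semi-closed sets containing it. -/
def sCl (A : Set X) : Set X := ⋂₀ {B : Set X | SemiClosed B ∧ A ⊆ B}

/-- A set is gs-closed if its semi-closure is contained in every open superset. -/
def GsClosed (A : Set X) : Prop := ∀ U : Set X, IsOpen U → A ⊆ U → sCl A ⊆ U

/-- A set is sg-closed if its semi-closure is contained in every semi-open superset. -/
def SgClosed (A : Set X) : Prop := ∀ U : Set X, SemiOpen U → A ⊆ U → sCl A ⊆ U

/-- A set is simply-open if it is the union of an open set and a nowhere dense set. -/
def SimplyOpen (A : Set X) : Prop := ∃ U N : Set X, IsOpen U ∧ IsNowhereDense N ∧ A = U ∪ N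

end Defs

section FunDefs
variable {X Y : Type*} [TopologicalSpace X] [TopologicalSpace Y]

/-- A function is contra-semicontinuous if preimages of open sets are semi-closed. -/
def ContraSemicontinuous (f : X → Y) : Prop := ∀ V : Set Y, IsOpen V → SemiClosed (f ⁻¹' V)

/-- A function is contra-continuous if preimages of open sets are closed. -/
def ContraContinuous (f : X → Y) : Prop := ∀ V : Set Y, IsOpen V → IsClosed (f ⁻¹' V)

/-- A function is SR-continuous if preimages of open sets are semi-regular. -/
def SRContinuous (f : X → Y) : Prop := ∀ V : Set Y, IsOpen V → SemiRegular (f ⁻¹' V)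

/-- A function is β-continuous if preimages of open sets are β-open. -/
def BetaContinuous (f : X → Y) : Prop := ∀ V : Set Y, IsOpen V → BetaOpen (f ⁻¹' V)

/-- A function is semi-continuous if preimages of open sets are semi-open. -/
def SemiContinuous (f : X → Y) : Prop := ∀ V : Set Y, IsOpen V → SemiOpen (f ⁻¹' V)

/-- A function is completely continuous if preimages of open sets are regular open. -/
def CompletelyContinuous (f : X → Y) : Prop := ∀ V : Set Y, IsOpen V → RegularOpen (f ⁻¹' V)

/-- A function is precontinuous if preimages of open sets are preopen. -/
def Precontinuous (f : X → Y) : Prop := ∀ V : Set Y, IsOpen V → Preopen (f ⁻¹' V)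

/-- A function is RC-continuous if preimages of open sets are regular closed. -/
def RCContinuous (f : X → Y) : Prop := ∀ V : Set Y, IsOpen V → RegularClosed (f ⁻¹' V)

/-- A function is B-continuous if preimages of open sets are B-sets. -/
def BContinuous (f : X → Y) : Prop := ∀ V : Set Y, IsOpen V → BSet (f ⁻¹' V)

/-- A function is contra-gs-continuous if preimages of open sets are gs-closed. -/
def ContraGsContinuous (f : X → Y) : Prop := ∀ V : Set Y, IsOpen V → GsClosed (f ⁻¹' V)

/-- A function is contra-sg-continuous if preimages of open sets are sg-closed. -/
def ContraSgContinuous (f : X → Y) : Prop := ∀ V : Set Y, IsOpen V → SgClosed (f ⁻¹' V)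

/-- A function is simply-continuous if preimages of open sets are simply-open. -/
def SimplyContinuous (f : X → Y) : Prop := ∀ V : Set Y, IsOpen V → SimplyOpen (f ⁻¹' V)

/-- A function is perfectly continuous if preimages of open sets are clopen. -/
def PerfectlyContinuous (f : X → Y) : Prop := ∀ V : Set Y, IsOpen V → IsClopen (f ⁻¹' V)

/-- A function is preclosed if images of closed sets are preclosed. -/
def PreclosedMap (f : X → Y) : Prop := ∀ C : Set X, IsClosed C → Preclosed (f '' C)

end FunDefs

section SpaceDefs
variable (X : Type*) [TopologicalSpace X]

/-- A space is semi-compact if every semi-open cover has a finite subcover. -/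
def SemiCompact : Prop :=
  ∀ S : Set (Set X), (∀ A ∈ S, SemiOpen A) → ⋃₀ S = univ →
    ∃ F : Finset (Set X), ↑F ⊆ S ∧ ⋃₀ (↑F : Set (Set X)) = univ

/-- A space is strongly S-closed if every closed cover has a finite subcover. -/
def StronglySClosed : Prop :=
  ∀ S : Set (Set X), (∀ A ∈ S, IsClosed A) → ⋃₀ S = univ →
    ∃ F : Finset (Set X), ↑F ⊆ S ∧ ⋃₀ (↑F : Set (Set X)) = univ

/-- A space is mildly compact if every clopen cover has a finite subcover. -/
def MildlyCompact : Prop :=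
  ∀ S : Set (Set X), (∀ A ∈ S, IsClopen A) → ⋃₀ S = univ →
    ∃ F : Finset (Set X), ↑F ⊆ S ∧ ⋃₀ (↑F : Set (Set X)) = univ

/-- A space is s-closed if every semi-open cover has a finite subfamily whose
semi-closures cover the space. -/
def IsSClosedSpace : Prop :=
  ∀ S : Set (Set X), (∀ A ∈ S, SemiOpen A) → ⋃₀ S = univ →
    ∃ F : Finset (Set X), ↑F ⊆ S ∧ (⋃ A ∈ F, sCl A) = univ

/-- A space is S-closed if every semi-open cover has a finite subfamily whose
closures cover the space. -/
def IsCapSClosedSpace : Prop :=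
  ∀ S : Set (Set X), (∀ A ∈ S, SemiOpen A) → ⋃₀ S = univ →
    ∃ F : Finset (Set X), ↑F ⊆ S ∧ (⋃ A ∈ F, closure A) = univ

/-- A space is nearly compact if every open cover has a finite subfamily such that the
interiors of the closures of its members cover the space. -/
def NearlyCompact : Prop :=
  ∀ S : Set (Set X), (∀ A ∈ S, IsOpen A) → ⋃₀ S = univ →
    ∃ F : Finset (Set X), ↑F ⊆ S ∧ (⋃ A ∈ F, interior (closure A)) = univ

/-- A space is hyperconnected if every nonempty open set is dense. -/
def Hyperconnected : Prop := ∀ U : Set X, IsOpen U → U.Nonempty → Dense U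

/-- A space satisfies the countable chain condition if every pairwise disjoint family of
nonempty open sets is countable. -/
def CCC : Prop :=
  ∀ S : Set (Set X), (∀ A ∈ S, IsOpen A ∧ A.Nonempty) → S.PairwiseDisjoint id → S.Countable

/-- A space is globally disconnected if every semi-open set is open. -/
def GloballyDisconnected : Prop := ∀ A : Set X, SemiOpen A → IsOpen A

/-- A space is locally indiscrete if every open set is closed. -/
def LocallyIndiscrete : Prop := ∀ U : Set X, IsOpen U → IsClosed U

end SpaceDefs

section Aux
variable {X : Type*} [TopologicalSpace X]

lemma semiOpen_compl_of_semiClosed {A : Set X} (h : SemiClosed A) : SemiOpen Aᶜ := by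
  unfold SemiOpen
  rw [interior_compl, closure_compl]
  exact compl_subset_compl.mpr h

lemma semiClosed_compl_of_semiOpen {A : Set X} (h : SemiOpen A) : SemiClosed Aᶜ := by
  unfold SemiClosed
  rw [closure_compl, interior_compl]
  exact compl_subset_compl.mpr h

lemma semiOpen_sUnion {S : Set (Set X)} (h : ∀ A ∈ S, SemiOpen A) : SemiOpen (⋃₀ S) := by
  intro x hx
  obtain ⟨A, hA, hxA⟩ := hx
  exact closure_mono (interior_mono (subset_sUnion_of_mem hA)) (h A hA hxA)

end Aux

theorem contraSemicontinuous_tfae {X Y : Type*} [TopologicalSpace X] [TopologicalSpace Y]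
    (f : X → Y) :
    List.TFAE [ContraSemicontinuous f,
      ∀ F : Set Y, IsClosed F → SemiOpen (f ⁻¹' F),
      ∀ x : X, ∀ F : Set Y, IsClosed F → f x ∈ F →
        ∃ U : Set X, SemiOpen U ∧ x ∈ U ∧ f '' U ⊆ F,
      ∀ V : Set Y, IsOpen V → interior (closure (f ⁻¹' V)) = interior (f ⁻¹' V),
      ∀ F : Set Y, IsClosed F → closure (interior (f ⁻¹' F)) = closure (f ⁻¹' F)] := by
  tfae_have 1 → 2
  | h, F, hF => by
    have := semiOpen_compl_of_semiClosed (h Fᶜ hF.isOpen_compl)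
    simpa [preimage_compl] using this
  tfae_have 2 → 1
  | h, V, hV => by
    have := semiClosed_compl_of_semiOpen (h Vᶜ hV.isClosed_compl)
    simpa [preimage_compl] using this
  tfae_have 2 → 3
  | h, x, F, hF, hx =>
    ⟨f ⁻¹' F, h F hF, hx, image_preimage_subset f F⟩
  tfae_have 3 → 2
  | h, F, hF => by
    choose U hU hxU hUF using fun x (hx : x ∈ f ⁻¹' F) => h x F hF hx
    have heq : f ⁻¹' F = ⋃₀ {A | ∃ x hx, A = U x hx} := by
      ext y
      constructor
      · intro hy
        exact ⟨U y hy, ⟨y, hy, rfl⟩, hxU y hy⟩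
      · rintro ⟨A, ⟨x, hx, rfl⟩, hyA⟩
        exact hUF x hx ⟨y, hyA, rfl⟩
    rw [heq]
    exact semiOpen_sUnion (by rintro A ⟨x, hx, rfl⟩; exact hU x hx)
  tfae_have 1 → 4
  | h, V, hV => by
    refine Subset.antisymm ?_ (interior_mono subset_closure)
    exact interior_maximal (h V hV) isOpen_interior
  tfae_have 4 → 1
  | h, V, hV => (h V hV).subset.trans interior_subset
  tfae_have 2 → 5
  | h, F, hF =>
    Subset.antisymm (closure_mono interior_subset)
      (closure_minimal (h F hF) isClosed_closure)
  tfae_have 5 → 2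
  | h, F, hF => subset_closure.trans (h F hF).symm.subset
  tfae_finish
end

section
/- For a function f from a topological space X to a topological space Y, the following are equivalent: (1) f is SR-continuous; (2) f is β-continuous and contra-semicontinuous. -/
open Set

theorem srContinuous_iff_betaContinuous_and_contraSemicontinuous
    {X Y : Type*} [TopologicalSpace X] [TopologicalSpace Y] (f : X → Y) :
    SRContinuous f ↔ BetaContinuous f ∧ ContraSemicontinuous f := by
  constructor
  · intro h
    constructor
    · intro V hV
      obtain ⟨hso, _⟩ := h V hV
      exact hso.trans (closure_mono (interior_mono subset_closure))
    · intro V hV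
      exact (h V hV).2
  · rintro ⟨hb, hc⟩ V hV
    have hsc := hc V hV
    have hsub : interior (closure (f ⁻¹' V)) ⊆ interior (f ⁻¹' V) :=
      interior_maximal hsc isOpen_interior
    refine ⟨(hb V hV).trans (closure_mono hsub), hsc⟩
end

section
/- Every function between topological spaces that is both contra-continuous and β-continuous is semi-continuous. -/
open Set

theorem semiContinuous_of_contraContinuous_of_betaContinuous
    {X Y : Type*} [TopologicalSpace X] [TopologicalSpace Y] (f : X → Y)
    (h₁ : ContraContinuous f) (h₂ : BetaContinuous f) :
    SemiContinuous f := by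
  intro V hV
  have hb := h₂ V hV
  rw [BetaOpen, (h₁ V hV).closure_eq] at hb
  exact hb
end

section
/- For a function f from a topological space X to a topological space Y, the following are equivalent: (1) f is RC-continuous; (2) f is β-continuous and contra-continuous. -/
open Set

theorem rcContinuous_iff_betaContinuous_and_contraContinuous
    {X Y : Type*} [TopologicalSpace X] [TopologicalSpace Y] (f : X → Y) :
    RCContinuous f ↔ BetaContinuous f ∧ ContraContinuous f := by
  constructor
  · intro h
    constructor
    · intro V hV
      have hA := h V hV
      unfold RegularClosed at hA
      unfold BetaOpen
      calc f ⁻¹' V = closure (interior (f ⁻¹' V)) := hA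
        _ ⊆ closure (interior (closure (f ⁻¹' V))) := by
            exact closure_mono (interior_mono subset_closure)
    · intro V hV
      have hA := h V hV
      rw [hA]
      exact isClosed_closure
  · rintro ⟨hb, hc⟩ V hV
    have hcl : IsClosed (f ⁻¹' V) := hc V hV
    have hbo := hb V hV
    unfold BetaOpen at hbo
    rw [hcl.closure_eq] at hbo
    unfold RegularClosed
    exact le_antisymm hbo (hcl.closure_interior_subset)
end

section
/- For a function f from a topological space X to a topological space Y, the following are equivalent: (1) f is contra-semicontinuous; (2) f is B-continuous and contra-gs-continuous. -/
open Set

lemma subset_sCl' {X : Type*} [TopologicalSpace X] (A : Set X) : A ⊆ sCl A := by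
  intro x hx B hB
  exact hB.2 hx

lemma sCl_subset' {X : Type*} [TopologicalSpace X] {A B : Set X} (hB : SemiClosed B)
    (hAB : A ⊆ B) : sCl A ⊆ B := fun x hx => hx B ⟨hB, hAB⟩

lemma semiClosed_sCl' {X : Type*} [TopologicalSpace X] (A : Set X) : SemiClosed (sCl A) := by
  intro x hx B hB
  have h1 : sCl A ⊆ B := fun y hy => hy B hB
  exact ((interior_mono (closure_mono h1)).trans hB.1) hx

theorem contraSemicontinuous_iff_bContinuous_and_contraGsContinuous
    {X Y : Type*} [TopologicalSpace X] [TopologicalSpace Y] (f : X → Y) :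
    ContraSemicontinuous f ↔ BContinuous f ∧ ContraGsContinuous f := by
  constructor
  · intro h
    constructor
    · intro V hV
      exact ⟨univ, f ⁻¹' V, isOpen_univ, h V hV, (univ_inter _).symm⟩
    · intro V hV U hU hAU
      exact (sCl_subset' (h V hV) (subset_refl _)).trans hAU
  · rintro ⟨hB, hGs⟩ V hV
    obtain ⟨U, F, hU, hF, hUF⟩ := hB V hV
    have hsub : f ⁻¹' V ⊆ U := hUF.le.trans inter_subset_left
    have h1 : sCl (f ⁻¹' V) ⊆ U := hGs V hV U hU hsub
    have h2 : sCl (f ⁻¹' V) ⊆ F := sCl_subset' hF (hUF.le.trans inter_subset_right)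
    have heq : sCl (f ⁻¹' V) = f ⁻¹' V :=
      (subset_inter h1 h2 |>.trans hUF.ge).antisymm (subset_sCl' _)
    have := semiClosed_sCl' (f ⁻¹' V)
    rwa [heq] at this
end

section
/- For a function f from a topological space X to a topological space Y, the following are equivalent: (1) f is SR-continuous; (2) f is β-continuous, B-continuous and contra-gs-continuous. -/
open Set

theorem srContinuous_iff_betaContinuous_bContinuous_contraGsContinuous
    {X Y : Type*} [TopologicalSpace X] [TopologicalSpace Y] (f : X → Y) :
    SRContinuous f ↔ BetaContinuous f ∧ BContinuous f ∧ ContraGsContinuous f := by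
  constructor
  · intro h
    refine ⟨fun V hV => ?_, fun V hV => ?_, fun V hV => ?_⟩
    · exact (h V hV).1.trans (closure_mono (interior_mono subset_closure))
    · exact ⟨univ, f ⁻¹' V, isOpen_univ, (h V hV).2, (univ_inter _).symm⟩
    · intro U hU hAU
      have hmem : f ⁻¹' V ∈ {B : Set X | SemiClosed B ∧ f ⁻¹' V ⊆ B} :=
        ⟨(h V hV).2, subset_rfl⟩
      exact (sInter_subset_of_mem hmem).trans hAU
  · rintro ⟨hβ, hB, hgs⟩ V hV
    obtain ⟨U, F, hU, hF, hAUF⟩ := hB V hV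
    set A := f ⁻¹' V with hA
    have hAsub : A ⊆ U := hAUF ▸ inter_subset_left
    have h1 : U ∩ interior (closure A) ⊆ A := by
      rw [hAUF]
      exact subset_inter inter_subset_left ((inter_subset_right).trans
        ((interior_mono (closure_mono inter_subset_right)).trans hF))
    have hopen : IsOpen (U ∩ interior (closure A)) := hU.inter isOpen_interior
    have h2 : U ∩ interior (closure A) ⊆ interior A := hopen.subset_interior_iff.mpr h1
    have hso : SemiOpen A := by
      intro x hx
      have hx2 : x ∈ U ∩ closure (interior (closure A)) := ⟨hAsub hx, hβ V hV hx⟩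
      have := hU.inter_closure hx2
      exact closure_mono h2 this
    refine ⟨hso, ?_⟩
    have hscl : interior (closure A) ⊆ sCl A := by
      intro x hx
      refine mem_sInter.mpr fun B hB => ?_
      exact hB.1 (interior_mono (closure_mono hB.2) hx)
    have h3 : sCl A ⊆ U := hgs V hV U hU hAsub
    exact fun x hx => h1 ⟨h3 (hscl hx), hx⟩
end

section
/- For a function f from a topological space X to a topological space Y, the following are equivalent: (1) f is completely continuous; (2) f is precontinuous, B-continuous and contra-gs-continuous. -/
open Set

theorem completelyContinuous_iff_precontinuous_bContinuous_contraGsContinuous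
    {X Y : Type*} [TopologicalSpace X] [TopologicalSpace Y] (f : X → Y) :
    CompletelyContinuous f ↔ Precontinuous f ∧ BContinuous f ∧ ContraGsContinuous f := by
  constructor
  · intro h
    refine ⟨fun V hV => (h V hV).le, fun V hV => ?_, fun V hV => ?_⟩
    · exact ⟨f ⁻¹' V, f ⁻¹' V, (h V hV) ▸ isOpen_interior,
        fun x hx => ((h V hV) ▸ hx : x ∈ f ⁻¹' V), (Set.inter_self _).symm⟩
    · intro U _ hsub
      have hsc : SemiClosed (f ⁻¹' V) := fun x hx => ((h V hV) ▸ hx : x ∈ f ⁻¹' V)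
      have : sCl (f ⁻¹' V) ⊆ f ⁻¹' V :=
        Set.sInter_subset_of_mem ⟨hsc, Set.Subset.refl _⟩
      exact this.trans hsub
  · rintro ⟨hp, hb, hg⟩ V hV
    set A := f ⁻¹' V with hA
    have hpre : A ⊆ interior (closure A) := hp V hV
    obtain ⟨U, F, hU, hF, hUF⟩ := hb V hV
    rw [← hA] at hUF
    -- A is open: A = U ∩ interior (closure A)
    have hopen : IsOpen A := by
      have h1 : A = U ∩ interior (closure A) := by
        apply Set.Subset.antisymm
        · exact Set.subset_inter (hUF ▸ Set.inter_subset_left) hpre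
        · rintro x ⟨hxU, hxI⟩
          have hAF : A ⊆ F := hUF ▸ Set.inter_subset_right
          have : interior (closure A) ⊆ F :=
            (interior_mono (closure_mono hAF)).trans hF
          exact hUF ▸ ⟨hxU, this hxI⟩
      rw [h1]; exact hU.inter isOpen_interior
    -- sCl A ⊆ A by gs-closedness with U = A
    have hsCl : sCl A ⊆ A := hg V hV A hopen (Set.Subset.refl _)
    -- sCl A is semi-closed
    have hsubsCl : A ⊆ sCl A := fun x hx B hB => hB.2 hx
    have hscl_sc : SemiClosed (sCl A) := by
      intro x hx
      intro B hB
      have : closure (sCl A) ⊆ closure B :=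
        closure_mono (Set.sInter_subset_of_mem hB)
      exact hB.1 (interior_mono this hx)
    have : interior (closure A) ⊆ A :=
      (interior_mono (closure_mono hsubsCl)).trans (hscl_sc.trans hsCl)
    exact Set.Subset.antisymm hpre this
end

section
/- For a function f from a topological space X to a topological space Y, the following are equivalent: (1) f is contra-semicontinuous; (2) f is simply-continuous and contra-sg-continuous. -/
open Set

section AuxLemmas
variable {X : Type*} [TopologicalSpace X]

lemma semiClosed_simplyOpen {A : Set X} (h : SemiClosed A) : SimplyOpen A := by
  refine ⟨interior A, A \ interior A, isOpen_interior, ?_, (Set.union_diff_cancel interior_subset).symm⟩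
  rw [IsNowhereDense]
  set U := interior (closure (A \ interior A)) with hUdef
  have hUopen : IsOpen U := isOpen_interior
  have hUsub : U ⊆ A := fun y hy =>
    h (interior_mono (closure_mono Set.diff_subset) hy)
  have hUint : U ∩ interior A = ∅ := by
    by_contra hne2
    obtain ⟨y, hyU, hyI⟩ := Set.nonempty_iff_ne_empty.2 hne2
    have hyc : y ∈ closure (A \ interior A) := interior_subset hyU
    obtain ⟨z, hz1, hz2, hz3⟩ := mem_closure_iff.1 hyc (U ∩ interior A)
      (hUopen.inter isOpen_interior) ⟨hyU, hyI⟩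
    exact hz3 hz1.2
  have hsub : U ⊆ interior A := interior_maximal hUsub hUopen
  rw [Set.eq_empty_iff_forall_notMem]
  intro x hx
  have : x ∈ U ∩ interior A := ⟨hx, hsub hx⟩
  rw [hUint] at this
  exact this

lemma semiClosed_sgClosed {A : Set X} (h : SemiClosed A) : SgClosed A := by
  intro U _ hAU
  have : sCl A ⊆ A := Set.sInter_subset_of_mem ⟨h, Set.Subset.rfl⟩
  exact this.trans hAU

lemma simplyOpen_sgClosed_semiClosed {A : Set X} (h1 : SimplyOpen A) (h2 : SgClosed A) :
    SemiClosed A := by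
  obtain ⟨U, N, hU, hN, rfl⟩ := h1
  set A := U ∪ N with hA
  set W := interior (closure A) with hW
  have hWopen : IsOpen W := isOpen_interior
  -- W ⊆ closure U
  have hWU : W ⊆ closure U := by
    have hdiff : W \ closure U ⊆ closure N := by
      intro x ⟨hxW, hxU⟩
      have : x ∈ closure A := interior_subset hxW
      rw [hA, closure_union] at this
      exact this.resolve_left hxU
    have hopen : IsOpen (W \ closure U) := hWopen.sdiff isClosed_closure
    have hempty : W \ closure U ⊆ (∅ : Set X) := by
      have : W \ closure U ⊆ interior (closure N) :=
        interior_maximal hdiff hopen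
      rwa [hN] at this
    intro x hxW
    by_contra hxU
    exact hempty ⟨hxW, hxU⟩ 
  -- the semi-open superset
  set V := A ∪ Wᶜ with hV
  have hVsemi : SemiOpen V := by
    intro x hx
    have hsub : U ∪ (closure W)ᶜ ⊆ interior V := by
      apply interior_maximal
      · apply Set.union_subset
        · exact (Set.subset_union_left).trans Set.subset_union_left
        · intro y hy
          exact Or.inr fun hyW => hy (subset_closure hyW)
      · exact hU.union (isClosed_closure.isOpen_compl)
    have hcl : closure U ∪ (interior (closure W))ᶜ ⊆ closure (interior V) := by
      apply Set.union_subset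
      · exact closure_mono ((Set.subset_union_left).trans hsub)
      · rw [← closure_compl]
        exact closure_mono ((Set.subset_union_right).trans hsub)
    apply hcl
    have hicW : interior (closure W) ⊆ W :=
      interior_mono (closure_minimal interior_subset isClosed_closure)
    rcases hx with hxA | hxW
    · rcases hxA with hxU | hxN
      · exact Or.inl (subset_closure hxU)
      · by_cases hx2 : x ∈ interior (closure W)
        · exact Or.inl (hWU (hicW hx2))
        · exact Or.inr hx2
    · exact Or.inr fun hx2 => hxW (hicW hx2)
  have hAV : A ⊆ V := Set.subset_union_left
  have hsClV : sCl A ⊆ V := h2 V hVsemi hAV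
  -- W ⊆ sCl A
  have hWsCl : W ⊆ sCl A := by
    intro x hx
    intro B hB
    obtain ⟨hBsc, hAB⟩ := hB
    exact hBsc (interior_mono (closure_mono hAB) hx)
  -- conclude
  intro x hx
  have hxV : x ∈ V := hsClV (hWsCl hx)
  rcases hxV with h | h
  · exact h
  · exact absurd hx h

end AuxLemmas

theorem contraSemicontinuous_iff_simplyContinuous_and_contraSgContinuous
    {X Y : Type*} [TopologicalSpace X] [TopologicalSpace Y] (f : X → Y) :
    ContraSemicontinuous f ↔ SimplyContinuous f ∧ ContraSgContinuous f := by
  constructor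
  · intro h
    exact ⟨fun V hV => semiClosed_simplyOpen (h V hV),
           fun V hV => semiClosed_sgClosed (h V hV)⟩
  · rintro ⟨h1, h2⟩ V hV
    exact simplyOpen_sgClosed_semiClosed (h1 V hV) (h2 V hV)
end

section
/- For a function f from a topological space X to a topological space Y, the following are equivalent: (1) f is completely continuous; (2) f is precontinuous, simply-continuous and contra-sg-continuous. -/
open Set

lemma open_subset_closure_diff_nd {X : Type*} [TopologicalSpace X] {W N : Set X}
    (hW : IsOpen W) (hN : IsNowhereDense N) : W ⊆ closure (W \ closure N) := by
  intro x hx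
  rw [mem_closure_iff]
  intro O hO hxO
  by_contra hc
  have hsub : O ∩ W ⊆ closure N := by
    intro y hy
    by_contra hyN
    exact hc ⟨y, hy.1, hy.2, hyN⟩
  have : O ∩ W ⊆ interior (closure N) :=
    (hO.inter hW).subset_interior_iff.mpr hsub
  rw [hN] at this
  exact this ⟨hxO, hx⟩

lemma sCl_subset_self_of_semiClosed {X : Type*} [TopologicalSpace X] {A : Set X}
    (h : SemiClosed A) : sCl A ⊆ A :=
  sInter_subset_of_mem ⟨h, subset_rfl⟩

lemma interior_closure_subset_sCl {X : Type*} [TopologicalSpace X] (A : Set X) :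
    interior (closure A) ⊆ sCl A := by
  intro x hx
  rw [sCl, mem_sInter]
  rintro B ⟨hB, hAB⟩
  exact hB (interior_mono (closure_mono hAB) hx)

theorem completelyContinuous_iff_precontinuous_simplyContinuous_contraSgContinuous
    {X Y : Type*} [TopologicalSpace X] [TopologicalSpace Y] (f : X → Y) :
    CompletelyContinuous f ↔ Precontinuous f ∧ SimplyContinuous f ∧ ContraSgContinuous f := by
  constructor
  · intro h
    refine ⟨fun V hV => le_of_eq (h V hV), fun V hV => ?_, fun V hV U _ hAU => ?_⟩
    · refine ⟨f ⁻¹' V, ∅, ?_, ?_, by simp⟩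
      · rw [h V hV]; exact isOpen_interior
      · simp [IsNowhereDense]
    · exact (sCl_subset_self_of_semiClosed (le_of_eq (h V hV).symm)).trans hAU
  · rintro ⟨hp, hs, hsg⟩ V hV
    set A := f ⁻¹' V with hA
    have hpre : A ⊆ interior (closure A) := hp V hV
    obtain ⟨U, N, hU, hN, hAUN⟩ := hs V hV
    -- A is semi-open
    have hAUN' : A = U ∪ N := hAUN
    have hUA : U ⊆ A := by rw [hAUN']; exact subset_union_left
    have hsemi : SemiOpen A := by
      have h1 : interior (closure A) ⊆ closure (interior (closure A) \ closure N) :=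
        open_subset_closure_diff_nd isOpen_interior hN
      have h2 : interior (closure A) \ closure N ⊆ closure U := by
        intro y hy
        have : y ∈ closure A := interior_subset hy.1
        rw [hAUN', closure_union] at this
        exact this.resolve_right hy.2
      calc A ⊆ interior (closure A) := hpre
        _ ⊆ closure (interior (closure A) \ closure N) := h1
        _ ⊆ closure (closure U) := closure_mono h2
        _ = closure U := closure_closure
        _ ⊆ closure (interior A) := closure_mono (hU.subset_interior_iff.mpr hUA)
    have hsc : sCl A ⊆ A := hsg V hV A hsemi subset_rfl
    exact Subset.antisymm hpre ((interior_closure_subset_sCl A).trans hsc)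
end

section
/- If f is a contra-semicontinuous surjection from a topological space X onto a topological space Y and X is semi-compact, then Y is strongly S-closed. -/
open Set

theorem stronglySClosed_of_contraSemicontinuous_surjection_of_semiCompact
    {X Y : Type*} [TopologicalSpace X] [TopologicalSpace Y] (f : X → Y)
    (hsurj : Function.Surjective f) (hf : ContraSemicontinuous f)
    (hX : SemiCompact X) : StronglySClosed Y := by
  intro S hcl hcov
  classical
  set S' : Set (Set X) := (fun A => f ⁻¹' A) '' S with hS'
  have hso : ∀ B ∈ S', SemiOpen B := by
    rintro B ⟨A, hA, rfl⟩
    have hopen : IsOpen Aᶜ := (hcl A hA).isOpen_compl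
    have hsc : SemiClosed (f ⁻¹' Aᶜ) := hf Aᶜ hopen
    have : f ⁻¹' Aᶜ = (f ⁻¹' A)ᶜ := rfl
    rw [this] at hsc
    unfold SemiOpen
    unfold SemiClosed at hsc
    have h1 : closure (interior (f ⁻¹' A)) = (interior (closure (f ⁻¹' A)ᶜ))ᶜ := by
      rw [← closure_compl, ← interior_compl, compl_compl]
    rw [h1]
    exact fun x hx hx' => (hsc hx') hx
  have hcov' : ⋃₀ S' = univ := by
    ext x
    simp only [mem_univ, iff_true, mem_sUnion]
    have : f x ∈ ⋃₀ S := hcov ▸ mem_univ _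
    obtain ⟨A, hA, hxA⟩ := this
    exact ⟨f ⁻¹' A, ⟨A, hA, rfl⟩, hxA⟩
  obtain ⟨F, hFS, hFcov⟩ := hX S' hso hcov'
  have hpick : ∀ B ∈ F, ∃ A ∈ S, f ⁻¹' A = B := fun B hB => hFS hB
  let g : Set X → Set Y := fun B =>
    if h : ∃ A ∈ S, f ⁻¹' A = B then h.choose else ∅
  have hg : ∀ B ∈ F, g B ∈ S ∧ f ⁻¹' (g B) = B := by
    intro B hB
    have h := hpick B hB
    simp only [g, dif_pos h]
    exact ⟨h.choose_spec.1, h.choose_spec.2⟩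
  refine ⟨F.image g, ?_, ?_⟩
  · intro A hA
    simp only [Finset.coe_image, mem_image, Finset.mem_coe] at hA
    obtain ⟨B, hB, rfl⟩ := hA
    exact (hg B hB).1
  · ext y
    simp only [mem_univ, iff_true, mem_sUnion]
    obtain ⟨x, rfl⟩ := hsurj y
    have : x ∈ ⋃₀ (↑F : Set (Set X)) := hFcov ▸ mem_univ _
    obtain ⟨B, hB, hxB⟩ := this
    refine ⟨g B, ?_, ?_⟩
    · simp only [Finset.coe_image, mem_image]
      exact ⟨B, hB, rfl⟩
    · have := (hg B hB).2
      rw [← this] at hxB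
      exact hxB
end

section
/- If f is a perfectly continuous surjection from a topological space X onto a topological space Y and X is mildly compact, then Y is strongly S-closed. -/
open Set

theorem stronglySClosed_of_perfectlyContinuous_surjection_of_mildlyCompact
    {X Y : Type*} [TopologicalSpace X] [TopologicalSpace Y] (f : X → Y)
    (hsurj : Function.Surjective f) (hf : PerfectlyContinuous f)
    (hX : MildlyCompact X) : StronglySClosed Y := by
  intro S hcl hcov
  set T : Set (Set X) := (fun A => f ⁻¹' A) '' S with hT
  have hTcl : ∀ B ∈ T, IsClopen B := by
    rintro B ⟨A, hA, rfl⟩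
    have := hf Aᶜ (hcl A hA).isOpen_compl
    simpa [Set.preimage_compl] using this.compl
  have hTcov : ⋃₀ T = univ := by
    ext x
    simp only [mem_sUnion, mem_univ, iff_true]
    have : f x ∈ ⋃₀ S := hcov ▸ mem_univ _
    obtain ⟨A, hA, hfx⟩ := this
    exact ⟨f ⁻¹' A, ⟨A, hA, rfl⟩, hfx⟩
  obtain ⟨F, hFS, hFcov⟩ := hX T hTcl hTcov
  choose g hg1 hg2 using fun (B : Set X) (hB : B ∈ T) => (hT ▸ hB : B ∈ _)
  classical
  refine ⟨F.attach.image (fun B => g B.1 (hFS B.2)), ?_, ?_⟩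
  · intro A hA
    simp only [Finset.coe_image, mem_image] at hA
    obtain ⟨B, _, rfl⟩ := hA
    exact hg1 _ _
  · apply eq_univ_of_forall
    intro y
    obtain ⟨x, rfl⟩ := hsurj y
    have : x ∈ ⋃₀ (↑F : Set (Set X)) := hFcov ▸ mem_univ _
    obtain ⟨B, hB, hxB⟩ := this
    refine ⟨g B (hFS hB), ?_, ?_⟩
    · simp only [Finset.coe_image, mem_image]
      exact ⟨⟨B, hB⟩, Finset.mem_attach _ _, rfl⟩
    · have := hg2 B (hFS hB)
      rw [← this] at hxB
      exact hxB
end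

section
/- Let X be a connected topological space and Y a T1 topological space. If f : X → Y is contra-continuous, then f is constant. -/
open Set

theorem contraContinuous_is_constant
    {X Y : Type*} [TopologicalSpace X] [TopologicalSpace Y]
    [ConnectedSpace X] [T1Space Y] (f : X → Y)
    (hf : ContraContinuous f) : ∀ x x' : X, f x = f x' := by
  intro x x'
  have hopen : ∀ y : Y, IsOpen (f ⁻¹' {y}) := by
    intro y
    have := hf {y}ᶜ (isOpen_compl_singleton)
    rw [preimage_compl] at this
    simpa using this.isOpen_compl
  have hclosed : IsClosed (f ⁻¹' {f x}) := by
    rw [← isOpen_compl_iff]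
    have : (f ⁻¹' {f x})ᶜ = ⋃ y ∈ ({f x}ᶜ : Set Y), f ⁻¹' {y} := by
      ext z; simp
    rw [this]
    exact isOpen_biUnion fun y _ => hopen y
  have : f ⁻¹' {f x} = univ :=
    IsClopen.eq_univ ⟨hclosed, hopen _⟩ ⟨x, rfl⟩
  have := this ▸ mem_univ x'
  simpa using this.symm
end

section
/- Let f be a contra-semicontinuous and preclosed surjection from a topological space X onto a topological space Y. If X is globally disconnected, then Y is locally indiscrete. -/
open Set

theorem locallyIndiscrete_of_contraSemicontinuous_preclosed_surjection
    {X Y : Type*} [TopologicalSpace X] [TopologicalSpace Y] (f : X → Y)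
    (hsurj : Function.Surjective f) (hf : ContraSemicontinuous f)
    (hpc : PreclosedMap f) (hX : GloballyDisconnected X) :
    LocallyIndiscrete Y := by
  intro V hV
  -- f ⁻¹' V is semi-closed, hence its complement is semi-open
  have hsc : SemiClosed (f ⁻¹' V) := hf V hV
  have hso : SemiOpen (f ⁻¹' V)ᶜ := by
    intro x hx
    have : closure (interior (f ⁻¹' V)ᶜ) = (interior (closure (f ⁻¹' V)))ᶜ := by
      rw [interior_compl, closure_compl]
    rw [this]
    exact fun hmem => hx (hsc hmem)
  have hopen : IsOpen (f ⁻¹' V)ᶜ := hX _ hso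
  have hclosed : IsClosed (f ⁻¹' V) := by
    simpa using hopen.isClosed_compl
  have hpre : Preclosed (f '' (f ⁻¹' V)) := hpc _ hclosed
  rw [Set.image_preimage_eq V hsurj] at hpre
  rw [Preclosed, hV.interior_eq] at hpre
  exact closure_subset_iff_isClosed.mp hpre
end

section
/- If f is a contra-semicontinuous surjection from a hyperconnected topological space X onto a topological space Y, then Y is connected. -/
open Set

theorem connected_of_contraSemicontinuous_image_of_hyperconnected
    {X Y : Type*} [TopologicalSpace X] [TopologicalSpace Y] (f : X → Y)
    (hsurj : Function.Surjective f) (hf : ContraSemicontinuous f)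
    (hX : Hyperconnected X) :
    ¬ ∃ U V : Set Y, IsOpen U ∧ IsOpen V ∧ U.Nonempty ∧ V.Nonempty ∧
      U ∩ V = ∅ ∧ U ∪ V = univ := by
  rintro ⟨U, V, hU, hV, hUne, hVne, hdisj, hcov⟩
  -- preimages
  set A := f ⁻¹' U with hA
  set B := f ⁻¹' V with hB
  have hApre : A ∪ B = univ := by
    rw [hA, hB, ← preimage_union, hcov, preimage_univ]
  have hABdisj : A ∩ B = ∅ := by
    rw [hA, hB, ← preimage_inter, hdisj, preimage_empty]
  have semiopen_of_compl : ∀ C D : Set X, SemiClosed D → C ∩ D = ∅ → C ∪ D = univ →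
      C ⊆ closure (interior C) := by
    intro C D hD hcd hcu
    have hCD : C = Dᶜ := by
      ext x
      constructor
      · intro hx hxD
        exact absurd (mem_inter hx hxD) (by simp [hcd])
      · intro hx
        rcases (eq_univ_iff_forall.mp hcu x) with h | h
        · exact h
        · exact absurd h hx
    rw [hCD]
    calc Dᶜ ⊆ (interior (closure D))ᶜ := compl_subset_compl.mpr hD
      _ = closure (closure D)ᶜ := by rw [← closure_compl]
      _ = closure (interior Dᶜ) := by rw [interior_compl]
  have hAso : A ⊆ closure (interior A) :=
    semiopen_of_compl A B (hf V hV) hABdisj hApre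
  have hBso : B ⊆ closure (interior B) :=
    semiopen_of_compl B A (hf U hU) (by rwa [inter_comm]) (by rwa [union_comm])
  obtain ⟨y, hy⟩ := hUne
  obtain ⟨x, hx⟩ := hsurj y
  have hAne : A.Nonempty := ⟨x, by simp [hA, hx, hy]⟩
  obtain ⟨z, hz⟩ := hVne
  obtain ⟨w, hw⟩ := hsurj z
  have hBne : B.Nonempty := ⟨w, by simp [hB, hw, hz]⟩
  have hiA : (interior A).Nonempty := by
    rcases hAne with ⟨a, ha⟩
    by_contra h
    rw [not_nonempty_iff_eq_empty] at h
    have := hAso ha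
    rw [h, closure_empty] at this
    exact this
  have hiB : (interior B).Nonempty := by
    rcases hBne with ⟨b, hb⟩
    by_contra h
    rw [not_nonempty_iff_eq_empty] at h
    have := hBso hb
    rw [h, closure_empty] at this
    exact this
  have hdense : Dense (interior A) := hX _ isOpen_interior hiA
  obtain ⟨p, hp⟩ := hdense.inter_open_nonempty _ isOpen_interior hiB
  have : p ∈ A ∩ B := ⟨interior_subset hp.2, interior_subset hp.1⟩
  rw [hABdisj] at this
  exact this
end
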